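/- The greedy firing sequence tends to the Thue-Morse sequence as q → 1⁻: for every N ∈ ℕ there exists ε > 0 such that for all q ∈ (1−ε, 1) and all i ≤ N, a_i(q) = t_i. -/

import Mathlib

/-- The Thue-Morse sequence on the alphabet `{-1, 1}`:
`t 0 = -1`, `t (2i) = t i`, `t (2i+1) = -t (2i)`. -/
def thueMorse : ℕ → ℤ
  | 0 => -1
  | n + 1 =>
    have : (n + 1) / 2 < n + 1 := Nat.div_lt_self (Nat.succ_pos n) one_lt_two
    if (n + 1) % 2 = 0 then thueMorse ((n + 1) / 2) else -thueMorse ((n + 1) / 2)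

/-- Auxiliary sequence: `greedyAux q n = (a_n(q), S_n(q))` where
`S_n(q) = ∑_{j=0}^n a_j(q) q^j`; the next shooter is `-a_n` iff
`f_n(q) = a_n(q) · S_n(q) ≥ 0`. -/
noncomputable def greedyAux (q : ℝ) : ℕ → ℤ × ℝ
  | 0 => (-1, -1)
  | n + 1 =>
    let p := greedyAux q n
    let next : ℤ := if 0 ≤ (p.1 : ℝ) * p.2 then -p.1 else p.1
    (next, p.2 + (next : ℝ) * q ^ (n + 1))

/-- The greedy firing sequence `a(q) : ℕ → {-1, 1}`: `a 0 = -1`, and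
`a (n+1) = -a n` if `f_n(q) = a_n · (∑_{j=0}^n a_j q^j) ≥ 0`, else `a (n+1) = a n`. -/
noncomputable def greedySeq (q : ℝ) (n : ℕ) : ℤ := (greedyAux q n).1

/-!
Write `T_n(q) = ∑_{j ≤ n} t_j q^j`. If the greedy sequence agrees with `t` up to index `n`, then
`f_n(q) = t_n T_n(q)`, so the greedy rule produces `t_{n+1}` as soon as `t_{n+1} T_n(q) < 0`; it
therefore suffices to show this sign condition for `q` close to `1` from below. The Thue–Morse
recursion gives `T_{2m+1}(q) = (1 - q) T_m(q²)`, which transfers the condition from `m` to `2m+1`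
because `q² → 1⁻` as `q → 1⁻`. For even `n`, `T_n(1) = t_n`, so `t_{n+1} T_n(1) = -1` and
continuity suffices.
-/

open Filter Topology Finset

lemma thueMorse_two_mul (i : ℕ) : thueMorse (2 * i) = thueMorse i := by
  cases i with
  | zero => rfl
  | succ k =>
    rw [show 2 * (k + 1) = 2 * k + 1 + 1 by ring, thueMorse,
      if_pos (by omega), show (2 * k + 1 + 1) / 2 = k + 1 by omega]

lemma thueMorse_two_mul_add_one (i : ℕ) : thueMorse (2 * i + 1) = -thueMorse i := by
  rw [thueMorse, if_neg (by omega), show (2 * i + 1) / 2 = i by omega]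

lemma thueMorse_eq_one_or_neg_one (n : ℕ) : thueMorse n = 1 ∨ thueMorse n = -1 := by
  induction n using Nat.strong_induction_on with
  | _ n ih =>
    match n with
    | 0 => exact Or.inr (by rw [thueMorse])
    | k + 1 =>
      have h := ih ((k + 1) / 2) (by omega)
      rw [thueMorse]
      split <;> omega

noncomputable def thueMorseSum (n : ℕ) (q : ℝ) : ℝ :=
  ∑ j ∈ range (n + 1), (thueMorse j : ℝ) * q ^ j

lemma thueMorseSum_succ (n : ℕ) (q : ℝ) :
    thueMorseSum (n + 1) q = thueMorseSum n q + (thueMorse (n + 1) : ℝ) * q ^ (n + 1) :=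
  sum_range_succ _ _

lemma thueMorseSum_two_mul_add_one (m : ℕ) (q : ℝ) :
    thueMorseSum (2 * m + 1) q = (1 - q) * thueMorseSum m (q ^ 2) := by
  induction m with
  | zero =>
    simp [thueMorseSum, sum_range_succ, thueMorse, neg_add_eq_sub]
  | succ k ih =>
    rw [show 2 * (k + 1) + 1 = 2 * k + 1 + 1 + 1 by ring, thueMorseSum_succ, thueMorseSum_succ, ih,
      thueMorseSum_succ, show 2 * k + 1 + 1 = 2 * (k + 1) by ring, thueMorse_two_mul_add_one,
      thueMorse_two_mul, pow_mul]
    push_cast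
    ring

lemma thueMorseSum_two_mul_one (m : ℕ) : thueMorseSum (2 * m) 1 = thueMorse (2 * m) := by
  cases m with
  | zero => simp [thueMorseSum]
  | succ k =>
    rw [show 2 * (k + 1) = 2 * k + 1 + 1 by ring, thueMorseSum_succ,
      thueMorseSum_two_mul_add_one]
    simp

lemma continuous_thueMorseSum (n : ℕ) : Continuous (thueMorseSum n) := by
  unfold thueMorseSum
  fun_prop

lemma tendsto_sq_nhdsLT_one : Tendsto (fun q : ℝ => q ^ 2) (𝓝[<] 1) (𝓝[<] 1) := by
  refine tendsto_nhdsWithin_iff.2 ⟨?_, ?_⟩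
  · simpa using ((continuous_pow 2).tendsto (1 : ℝ)).mono_left nhdsWithin_le_nhds
  · filter_upwards [Ioo_mem_nhdsLT zero_lt_one] with q ⟨hq0, hq1⟩
    exact pow_lt_one₀ hq0.le hq1 two_ne_zero

theorem eventually_thueMorse_succ_mul_thueMorseSum_neg (n : ℕ) :
    ∀ᶠ q in 𝓝[<] 1, (thueMorse (n + 1) : ℝ) * thueMorseSum n q < 0 := by
  induction n using Nat.strong_induction_on with
  | _ n ih =>
    rcases Nat.even_or_odd' n with ⟨m, rfl | rfl⟩
    · have hcont : Continuous fun q => (thueMorse (2 * m + 1) : ℝ) * thueMorseSum (2 * m) q :=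
        continuous_const.mul (continuous_thueMorseSum _)
      have hone : (thueMorse (2 * m + 1) : ℝ) * thueMorseSum (2 * m) 1 < 0 := by
        rw [thueMorseSum_two_mul_one, thueMorse_two_mul_add_one, thueMorse_two_mul]
        rcases thueMorse_eq_one_or_neg_one m with h | h <;> simp [h]
      exact nhdsWithin_le_nhds (hcont.continuousAt.eventually_lt continuousAt_const hone)
    · have hsq := tendsto_sq_nhdsLT_one.eventually (ih m (by omega))
      filter_upwards [hsq, self_mem_nhdsWithin] with q hq (hq1 : q < 1)
      rw [thueMorseSum_two_mul_add_one, show 2 * m + 1 + 1 = 2 * (m + 1) by ring,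
        thueMorse_two_mul]
      nlinarith

lemma greedyAux_snd_eq_sum (q : ℝ) (n : ℕ) :
    (greedyAux q n).2 = ∑ j ∈ range (n + 1), (greedySeq q j : ℝ) * q ^ j := by
  induction n with
  | zero => simp [greedyAux, greedySeq]
  | succ k ih =>
    rw [sum_range_succ, ← ih]
    rfl

lemma greedySeq_succ (q : ℝ) (n : ℕ) :
    greedySeq q (n + 1) =
      if 0 ≤ (greedySeq q n : ℝ) * ∑ j ∈ range (n + 1), (greedySeq q j : ℝ) * q ^ j
      then -greedySeq q n else greedySeq q n := by
  rw [← greedyAux_snd_eq_sum]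
  rfl

theorem greedySeq_succ_eq_thueMorse {q : ℝ} {n : ℕ}
    (hagree : ∀ j ≤ n, greedySeq q j = thueMorse j)
    (hsign : (thueMorse (n + 1) : ℝ) * thueMorseSum n q < 0) :
    greedySeq q (n + 1) = thueMorse (n + 1) := by
  have hsum : ∑ j ∈ range (n + 1), (greedySeq q j : ℝ) * q ^ j = thueMorseSum n q :=
    sum_congr rfl fun j hj => by rw [hagree j (Nat.lt_succ_iff.mp (mem_range.mp hj))]
  rw [greedySeq_succ, hsum, hagree n le_rfl]
  rcases thueMorse_eq_one_or_neg_one n with h | h <;>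
    rcases thueMorse_eq_one_or_neg_one (n + 1) with h' | h' <;>
    rw [h'] at hsign ⊢ <;> simp only [h] <;> push_cast at hsign ⊢ <;> split_ifs <;>
    first | rfl | linarith

theorem eventually_greedySeq_eq_thueMorse (N : ℕ) :
    ∀ᶠ q in 𝓝[<] 1, ∀ i ≤ N, greedySeq q i = thueMorse i := by
  induction N with
  | zero =>
    refine Eventually.of_forall fun q i hi => ?_
    rw [Nat.le_zero.mp hi, greedySeq, greedyAux, thueMorse]
  | succ N ih =>
    filter_upwards [ih, eventually_thueMorse_succ_mul_thueMorseSum_neg N]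
      with q hagree hsign i hi
    rcases Nat.lt_or_eq_of_le hi with hi | rfl
    · exact hagree i (Nat.lt_succ_iff.mp hi)
    · exact greedySeq_succ_eq_thueMorse hagree hsign

/-- The greedy firing sequence tends to the Thue-Morse sequence as `q → 1⁻`:
for every `N` there is `ε > 0` such that for all `q ∈ (1-ε, 1)` and all `i ≤ N`,
`a_i(q) = t_i`. -/
theorem greedySeq_tendsto_thueMorse (N : ℕ) :
    ∃ ε > (0 : ℝ), ∀ q ∈ Set.Ioo (1 - ε) (1 : ℝ), ∀ i ≤ N,
      greedySeq q i = thueMorse i := by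
  obtain ⟨l, hl, hsub⟩ :=
    mem_nhdsLT_iff_exists_Ioo_subset.mp (eventually_greedySeq_eq_thueMorse N)
  exact ⟨1 - l, sub_pos.mpr hl, fun q hq => hsub (by simpa using hq)⟩
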